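/- Mackey formula for the transfer on abelianizations: let G be a finite group and H, K subgroups. Then the composite of the map H^{ab} → G^{ab} induced by inclusion followed by the transfer G^{ab} → K^{ab} equals the sum (in the abelian group K^{ab}, written additively) over a set of representatives x of the double cosets K\G/H of the composites H^{ab} → (K ∩ xHx⁻¹)^{ab} → K^{ab}, where the first map is the transfer from xHx⁻¹ to K ∩ xHx⁻¹ precomposed with the isomorphism induced by conjugation by x, and the second map is induced by the inclusion K ∩ xHx⁻¹ ≤ K. -/

import Mathlib

/-! The subgroup `H` acts on `G ⧸ K`, and its orbits are indexed by `K \ G / H`: the orbit of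
`x⁻¹K` is `Hx⁻¹K / K`, which left translation by `x` identifies with
`xHx⁻¹ / (K ∩ xHx⁻¹)`. Computing the transfer of `h ∈ H` with the transversal of
`G ⧸ K` made of the elements `x⁻¹c` (`x ∈ R`, `c` running over representatives of
`xHx⁻¹ / (K ∩ xHx⁻¹)`), the product splits along these orbits, and the factor of the orbit
of `x⁻¹K` is the transfer of `xhx⁻¹` from `xHx⁻¹` to `K ∩ xHx⁻¹`. -/

/-- The Mackey summand attached to a double-coset representative `x`: the composite
`H^{ab} → (xHx⁻¹)^{ab} → (K ∩ xHx⁻¹)^{ab} → K^{ab}`, where the first map is induced by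
conjugation by `x`, the second is the transfer, and the third is induced by inclusion. -/
noncomputable def mackeyTerm {G : Type*} [Group G] [Finite G] (H K : Subgroup G) (x : G) :
    Abelianization H →* Abelianization K :=
  let C : Subgroup G := H.map (MulAut.conj x).toMonoidHom
  let incl : ((K ⊓ C).subgroupOf C) →* K :=
    (Subgroup.inclusion inf_le_left).comp
      (Subgroup.subgroupOfEquivOfLe inf_le_right).toMonoidHom
  (Abelianization.map incl).comp
    ((Abelianization.lift (MonoidHom.transfer
        (Abelianization.of :
          ((K ⊓ C).subgroupOf C) →* Abelianization ((K ⊓ C).subgroupOf C)))).comp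
      (Abelianization.map
        (Subgroup.equivMapOfInjective H (MulAut.conj x).toMonoidHom
          (MulAut.conj x).injective).toMonoidHom))

open Subgroup MonoidHom

namespace MonoidHom

variable {G : Type*} [Group G] {K : Subgroup G}

theorem transfer_eq_prod_of_bijective [K.FiniteIndex] {A : Type*} [CommGroup A] (ϕ : K →* A)
    {ι : Type*} [Fintype ι] {s : ι → G} (hs : Function.Bijective fun i ↦ (s i : G ⧸ K))
    (g : G) {τ : ι → ι} {k : ι → K} (hk : ∀ i, s i * k i = g * s (τ i)) :
    transfer ϕ g = ∏ i, ϕ (k i) := by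
  let e := Equiv.ofBijective _ hs
  have hf : ∀ q, ((s (e.symm q) : G) : G ⧸ K) = q := e.apply_symm_apply
  have hτ : ∀ i, e.symm (g⁻¹ • e i) = τ i := fun i ↦ by
    rw [e.symm_apply_eq, inv_smul_eq_iff]
    change ((s i : G) : G ⧸ K) = g • ((s (τ i) : G) : G ⧸ K)
    rw [MulAction.Quotient.smul_mk, smul_eq_mul, ← hk, QuotientGroup.mk_mul_of_mem _ (k i).2]
  let := K.fintypeQuotientOfFiniteIndex
  rw [transfer_def ϕ ⟨_, isComplement_range_left hf⟩ g, leftTransversals.diff, ← e.prod_comp]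
  refine Finset.prod_congr rfl fun i _ ↦ congrArg ϕ (Subtype.ext ?_)
  simp only [smul_apply_eq_smul_apply_inv_smul, IsComplement.leftQuotientEquiv_apply hf,
    Equiv.symm_apply_apply, hτ, smul_eq_mul]
  exact inv_mul_eq_of_eq_mul (hk i).symm

end MonoidHom

namespace QuotientGroup

variable {G : Type*} [Group G] {K : Subgroup G}

theorem exists_out_mul_eq_mul_out_inv_smul (g : G) :
    ∃ k : G ⧸ K → K, ∀ q, q.out * k q = g * (g⁻¹ • q).out := by
  refine ⟨fun q ↦ ⟨q.out⁻¹ * (g * (g⁻¹ • q).out), QuotientGroup.eq.mp ?_⟩,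
    fun q ↦ mul_inv_cancel_left _ _⟩
  rw [out_eq', ← smul_eq_mul, MulAction.Quotient.mk_smul_out, smul_inv_smul]

end QuotientGroup

namespace Mackey

variable {G : Type*} [Group G] (H K : Subgroup G)

abbrev conj (x : G) : Subgroup G := H.map (MulAut.conj x).toMonoidHom

abbrev conjInf (x : G) : Subgroup (conj H x) := (K ⊓ conj H x).subgroupOf (conj H x)

variable {H K}

theorem mk_inv_mul_eq_mk_inv_mul_iff {x : G} {a b : conj H x} :
    ((x⁻¹ * a : G) : G ⧸ K) = (x⁻¹ * b : G) ↔ (a : conj H x ⧸ conjInf H K x) = b := by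
  rw [QuotientGroup.eq, QuotientGroup.eq, mem_subgroupOf, mem_inf, coe_mul, coe_inv, mul_inv_rev,
    inv_inv, mul_assoc, mul_inv_cancel_left]
  exact (and_iff_left (a⁻¹ * b).2).symm

theorem eq_of_mk_inv_mul_eq {R : Finset G}
    (hR : ∀ d : DoubleCoset.Quotient (K : Set G) (H : Set G),
      ∃! x, x ∈ R ∧ DoubleCoset.mk K H x = d)
    {x y : G} (hx : x ∈ R) (hy : y ∈ R) {a : conj H x} {b : conj H y}
    (hab : ((x⁻¹ * a : G) : G ⧸ K) = (y⁻¹ * b : G)) : x = y := by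
  obtain ⟨h, hh, ha⟩ := mem_map.mp a.2
  obtain ⟨h', hh', hb⟩ := mem_map.mp b.2
  have hK := QuotientGroup.eq.mp hab
  have hxy : DoubleCoset.mk K H y = DoubleCoset.mk K H x := by
    refine (DoubleCoset.eq _ _ _ _).mpr
      ⟨x * h⁻¹ * h' * y⁻¹, ?_, h'⁻¹ * h, mul_mem (inv_mem hh') hh, by group⟩
    convert hK using 1
    rw [← ha, ← hb]
    simp only [MulEquiv.coe_toMonoidHom, MulAut.conj_apply]
    group
  exact (hR _).unique ⟨hx, rfl⟩ ⟨hy, hxy⟩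

theorem bijective_mk_inv_mul_out {R : Finset G}
    (hR : ∀ d : DoubleCoset.Quotient (K : Set G) (H : Set G),
      ∃! x, x ∈ R ∧ DoubleCoset.mk K H x = d) :
    Function.Bijective fun σ : (Σ x : R, conj H x ⧸ conjInf H K x) ↦
      (((σ.1 : G)⁻¹ * (σ.2.out : G) : G) : G ⧸ K) := by
  constructor
  · rintro ⟨⟨x, hx⟩, p⟩ ⟨⟨y, hy⟩, r⟩ h
    obtain rfl := eq_of_mk_inv_mul_eq hR hx hy h
    obtain rfl : p = r := by
      simpa only [QuotientGroup.out_eq'] using mk_inv_mul_eq_mk_inv_mul_iff.mp h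
    rfl
  · refine fun q ↦ QuotientGroup.induction_on q fun g ↦ ?_
    obtain ⟨x, ⟨hx, hxg⟩, -⟩ := hR (DoubleCoset.mk K H g⁻¹)
    obtain ⟨k, hk, h, hh, hg⟩ := (DoubleCoset.eq _ _ _ _).mp hxg
    let c : conj H x := ⟨x * h⁻¹ * x⁻¹, h⁻¹, inv_mem hh, rfl⟩
    refine ⟨⟨⟨x, hx⟩, c⟩, ?_⟩
    refine (mk_inv_mul_eq_mk_inv_mul_iff.mpr (QuotientGroup.out_eq' _)).trans
      (QuotientGroup.eq.mpr ?_)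
    rw [← inv_inv g, hg]
    convert inv_mem hk using 1
    simp only [c]
    group

theorem mackeyTerm_of [Finite G] (x : G) (h : H) (c : conj H x) (hc : (c : G) = x * h * x⁻¹)
    [Fintype (conj H x ⧸ conjInf H K x)] {k : conj H x ⧸ conjInf H K x → conjInf H K x}
    (hk : ∀ p, p.out * k p = c * (c⁻¹ • p).out) :
    mackeyTerm H K x (Abelianization.of h) =
      ∏ p, Abelianization.of (⟨k p, (mem_subgroupOf.mp (k p).2).1⟩ : K) := by
  have hc' : equivMapOfInjective H _ (MulAut.conj x).injective h = c := Subtype.ext hc.symm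
  simp only [mackeyTerm, MonoidHom.comp_apply, Abelianization.map_of, MulEquiv.coe_toMonoidHom,
    hc', Abelianization.lift_apply_of]
  rw [transfer_eq_prod_of_bijective _ ?_ c hk, map_prod]
  · rfl
  · simp only [QuotientGroup.out_eq']
    exact Function.bijective_id

end Mackey

/-- Mackey formula for the transfer on abelianizations: the composite of
`H^{ab} → G^{ab}` (induced by inclusion) with the transfer `G^{ab} → K^{ab}` equals the
sum over double-coset representatives `x` of `K\G/H` of the Mackey summands. -/
theorem mackey_transfer_formula {G : Type*} [Group G] [Finite G] (H K : Subgroup G)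
    (R : Finset G)
    (hR : ∀ d : DoubleCoset.Quotient (K : Set G) (H : Set G),
      ∃! x, x ∈ R ∧ DoubleCoset.mk K H x = d)
    (h : Abelianization H) :
    Abelianization.lift
        (MonoidHom.transfer (Abelianization.of : K →* Abelianization K))
        (Abelianization.map H.subtype h) =
      ∏ x ∈ R, mackeyTerm H K x h := by
  classical
  suffices key : ∀ h₀ : H, transfer (Abelianization.of : K →* Abelianization K) (h₀ : G) =
      ∏ x ∈ R, mackeyTerm H K x (Abelianization.of h₀) by
    have := Abelianization.hom_ext ((Abelianization.lift (transfer Abelianization.of)).comp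
      (Abelianization.map H.subtype)) (∏ x ∈ R, mackeyTerm H K x)
      (MonoidHom.ext fun h₀ ↦ by simpa using key h₀)
    simpa using DFunLike.congr_fun this h
  intro h₀
  let c (x : G) : Mackey.conj H x := ⟨x * h₀ * x⁻¹, h₀, h₀.2, rfl⟩
  choose k hk using fun x ↦
    QuotientGroup.exists_out_mul_eq_mul_out_inv_smul (K := Mackey.conjInf H K x) (c x)
  let _ (x : G) : Fintype (Mackey.conj H x ⧸ Mackey.conjInf H K x) := Fintype.ofFinite _
  rw [transfer_eq_prod_of_bijective _ (Mackey.bijective_mk_inv_mul_out hR) (h₀ : G)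
    (τ := fun σ ↦ ⟨σ.1, (c σ.1)⁻¹ • σ.2⟩)
    (k := fun σ ↦ ⟨k σ.1 σ.2, (mem_subgroupOf.mp (k σ.1 σ.2).2).1⟩) ?_]
  · rw [← Finset.univ_sigma_univ, Finset.prod_sigma, ← Finset.prod_coe_sort R]
    exact Finset.prod_congr rfl fun x _ ↦
      (Mackey.mackeyTerm_of (x : G) h₀ (c x) rfl (hk x)).symm
  · rintro ⟨x, p⟩
    have hkx := congrArg Subtype.val (hk x p)
    simp only [coe_mul] at hkx ⊢
    rw [mul_assoc, hkx]
    simp only [c]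
    group
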